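/- Define τ_{b|x} := (1/4)[ I + ((−1)^b/√2)( Z + x X ) ] for b, x ∈ {0,1}, Charlie's measurement operators M_{c|0} = (I + (−1)^c (2Z+X)/√5)/2 and M_{c|1} = (I + (−1)^c X)/2, and the behavior P(b,c|x,z) := Tr[ τ_{b|x} M_{c|z} ]. Then P is Bell nonlocal: there do not exist a finite set Λ, weights P_λ ≥ 0 with ∑_λ P_λ = 1, and conditional distributions q_λ(b|x) ≥ 0 with ∑_b q_λ(b|x) = 1 and r_λ(c|z) ≥ 0 with ∑_c r_λ(c|z) = 1, such that P(b,c|x,z) = ∑_λ P_λ q_λ(b|x) r_λ(c|z) for all b, c, x, z. -/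

import Mathlib

open Matrix BigOperators ComplexOrder

set_option maxHeartbeats 1000000
set_option linter.unusedTactic false

noncomputable section

/-- Pauli X matrix. -/
def X : Matrix (Fin 2) (Fin 2) ℂ := !![0, 1; 1, 0]

/-- Pauli Z matrix. -/
def Z : Matrix (Fin 2) (Fin 2) ℂ := !![1, 0; 0, -1]

/-- The wired bipartite assemblage τ_{b|x}. -/
def τ : Fin 2 → Fin 2 → Matrix (Fin 2) (Fin 2) ℂ := fun b x =>
  (1 / 4 : ℝ) • ((1 : Matrix (Fin 2) (Fin 2) ℂ) +
    ((-1 : ℝ) ^ (b : ℕ) / Real.sqrt 2) • (Z + ((x : ℕ) : ℝ) • X))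

/-- Charlie's measurement operators: the (2Z+X)/√5 basis for z = 0, the X basis for z = 1. -/
def Mc : Fin 2 → Fin 2 → Matrix (Fin 2) (Fin 2) ℂ := fun c z =>
  if z = 0 then
    (1 / 2 : ℝ) • ((1 : Matrix (Fin 2) (Fin 2) ℂ) +
      ((-1 : ℝ) ^ (c : ℕ) / Real.sqrt 5) • ((2 : ℝ) • Z + X))
  else
    (1 / 2 : ℝ) • ((1 : Matrix (Fin 2) (Fin 2) ℂ) + ((-1 : ℝ) ^ (c : ℕ)) • X)

/-- The behavior obtained from τ by Charlie's measurements. -/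
def Pbeh (b c x z : Fin 2) : ℂ := (τ b x * Mc c z).trace

/-- The correlators of the behavior. -/
def E (x z : Fin 2) : ℂ :=
  ∑ b : Fin 2, ∑ c : Fin 2, (-1 : ℂ) ^ ((b : ℕ) + (c : ℕ)) * Pbeh b c x z

lemma sqrt10_eq : Real.sqrt 10 = Real.sqrt 2 * Real.sqrt 5 := by
  rw [show (10:ℝ) = 2 * 5 by norm_num, Real.sqrt_mul (by norm_num)]

lemma Eval : E 0 0 = ((2 / Real.sqrt 10 : ℝ) : ℂ) ∧ E 1 0 = ((3 / Real.sqrt 10 : ℝ) : ℂ)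
    ∧ E 0 1 = ((0 : ℝ) : ℂ) ∧ E 1 1 = ((1 / Real.sqrt 2 : ℝ) : ℂ) := by
  have h2 := Real.sqrt_nonneg 2; have h5 := Real.sqrt_nonneg 5
  have s2 : Real.sqrt 2 ≠ 0 := by positivity
  have s5 : Real.sqrt 5 ≠ 0 := by positivity
  refine ⟨?_, ?_, ?_, ?_⟩ <;>
  · simp [E, Pbeh, τ, Mc, X, Z, Matrix.trace, Matrix.mul_apply, Fin.sum_univ_two,
      Matrix.smul_apply, Matrix.one_apply, Matrix.add_apply, sqrt10_eq]
    all_goals push_cast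
    all_goals field_simp
    all_goals ring

lemma chsh_pointwise (a0 a1 b0 b1 : ℝ) (ha0 : |a0| ≤ 1) (ha1 : |a1| ≤ 1)
    (hb0 : |b0| ≤ 1) (hb1 : |b1| ≤ 1) :
    a0 * b0 - a0 * b1 + a1 * b0 + a1 * b1 ≤ 2 := by
  rw [abs_le] at ha0 ha1 hb0 hb1
  obtain ⟨a0l, a0u⟩ := ha0; obtain ⟨a1l, a1u⟩ := ha1
  obtain ⟨b0l, b0u⟩ := hb0; obtain ⟨b1l, b1u⟩ := hb1
  rcases le_total b1 b0 with h | h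
  · nlinarith
  · nlinarith

lemma chsh_value : (2:ℝ) < 2 / Real.sqrt 10 - 0 + 3 / Real.sqrt 10 + 1 / Real.sqrt 2 := by
  have h10 : Real.sqrt 10 < 3.17 := by
    nlinarith [Real.sq_sqrt (by norm_num : (0:ℝ) ≤ 10), Real.sqrt_nonneg 10]
  have h2 : Real.sqrt 2 < 1.42 := by
    nlinarith [Real.sq_sqrt (by norm_num : (0:ℝ) ≤ 2), Real.sqrt_nonneg 2]
  have p10 : (0:ℝ) < Real.sqrt 10 := Real.sqrt_pos.2 (by norm_num)
  have p2 : (0:ℝ) < Real.sqrt 2 := Real.sqrt_pos.2 (by norm_num)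
  have e1 : 5 / (3.17:ℝ) < 5 / Real.sqrt 10 := by gcongr
  have e2 : 1 / (1.42:ℝ) < 1 / Real.sqrt 2 := by gcongr
  have e : 2 / Real.sqrt 10 + 3 / Real.sqrt 10 = 5 / Real.sqrt 10 := by ring
  nlinarith

/-- The behavior P(b,c|x,z) = Tr[τ_{b|x} M_{c|z}] is Bell nonlocal: it admits no LHV model. -/
theorem behavior_bell_nonlocal :
    ¬ ∃ (n : ℕ) (w : Fin n → ℝ) (q : Fin n → Fin 2 → Fin 2 → ℝ) (r : Fin n → Fin 2 → Fin 2 → ℝ),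
        (∀ l, 0 ≤ w l) ∧ (∑ l, w l = 1) ∧
        (∀ l b x, 0 ≤ q l b x) ∧ (∀ l x, ∑ b, q l b x = 1) ∧
        (∀ l c z, 0 ≤ r l c z) ∧ (∀ l z, ∑ c, r l c z = 1) ∧
        (∀ b c x z, Pbeh b c x z = ((∑ l, w l * q l b x * r l c z : ℝ) : ℂ)) := by
  rintro ⟨n, w, q, r, hw, hws, hq, hqs, hr, hrs, hP⟩
  set A : Fin n → Fin 2 → ℝ := fun l x => q l 0 x - q l 1 x with hA
  set B : Fin n → Fin 2 → ℝ := fun l z => r l 0 z - r l 1 z with hB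
  have hAb : ∀ l x, |A l x| ≤ 1 := by
    intro l x
    have h := hqs l x
    rw [Fin.sum_univ_two] at h
    have := hq l 0 x; have := hq l 1 x
    rw [abs_le]; constructor <;> simp only [hA] <;> linarith
  have hBb : ∀ l z, |B l z| ≤ 1 := by
    intro l z
    have h := hrs l z
    rw [Fin.sum_univ_two] at h
    have := hr l 0 z; have := hr l 1 z
    rw [abs_le]; constructor <;> simp only [hB] <;> linarith
  have hEc : ∀ x z, E x z = ((∑ l, w l * A l x * B l z : ℝ) : ℂ) := by
    intro x z
    have hre : (∑ l, w l * A l x * B l z) =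
        (∑ l, w l * q l 0 x * r l 0 z) - (∑ l, w l * q l 0 x * r l 1 z)
        - (∑ l, w l * q l 1 x * r l 0 z) + (∑ l, w l * q l 1 x * r l 1 z) := by
      rw [← Finset.sum_sub_distrib, ← Finset.sum_sub_distrib, ← Finset.sum_add_distrib]
      refine Finset.sum_congr rfl fun l _ => by simp only [hA, hB]; ring
    simp only [E, Fin.sum_univ_two, hP]
    rw [hre]
    push_cast
    simp only [Fin.val_zero, Fin.val_one]
    norm_num
    ring
  obtain ⟨e00, e10, e01, e11⟩ := Eval
  have h00 : (∑ l, w l * A l 0 * B l 0) = 2 / Real.sqrt 10 :=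
    Complex.ofReal_inj.1 ((hEc 0 0).symm.trans e00)
  have h10 : (∑ l, w l * A l 1 * B l 0) = 3 / Real.sqrt 10 :=
    Complex.ofReal_inj.1 ((hEc 1 0).symm.trans e10)
  have h01 : (∑ l, w l * A l 0 * B l 1) = 0 :=
    Complex.ofReal_inj.1 ((hEc 0 1).symm.trans e01)
  have h11 : (∑ l, w l * A l 1 * B l 1) = 1 / Real.sqrt 2 :=
    Complex.ofReal_inj.1 ((hEc 1 1).symm.trans e11)
  have hsum : (∑ l, w l * (A l 0 * B l 0 - A l 0 * B l 1 + A l 1 * B l 0 + A l 1 * B l 1))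
      = 2 / Real.sqrt 10 - 0 + 3 / Real.sqrt 10 + 1 / Real.sqrt 2 := by
    rw [← h00, ← h01, ← h10, ← h11, ← Finset.sum_sub_distrib, ← Finset.sum_add_distrib,
      ← Finset.sum_add_distrib]
    exact Finset.sum_congr rfl fun l _ => by ring
  have hle : (∑ l, w l * (A l 0 * B l 0 - A l 0 * B l 1 + A l 1 * B l 0 + A l 1 * B l 1)) ≤ 2 := by
    calc _ ≤ ∑ l, w l * 2 := Finset.sum_le_sum fun l _ =>
            mul_le_mul_of_nonneg_left
              (chsh_pointwise _ _ _ _ (hAb l 0) (hAb l 1) (hBb l 0) (hBb l 1)) (hw l)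
      _ = 2 := by rw [← Finset.sum_mul, hws, one_mul]
  have := chsh_value
  linarith [hsum ▸ hle]
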